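/- arXiv:math/0505317 — 2 statements merged into one kernel-verified Lean document; each statement's English description precedes it below -/
import Mathlib

section
/- For every k ≥ 1, Σ_k = −(1/k)·[x^{k+1}] ∏_{j=0}^{k−1} Φ(x, j), where Φ(x, j) denotes the formal power series in x obtained by substituting u = j in Φ(x,u), and [x^{k+1}] extracts the coefficient of x^{k+1}. -/
noncomputable section

/-- The coefficient ring `ℚ[R₂, R₃, …]`: we use `MvPolynomial ℕ ℚ`, where the
variable `MvPolynomial.X i` plays the role of the free cumulant indeterminate `Rᵢ`
(only the variables with `i ≥ 2` actually occur). -/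
abbrev A : Type := MvPolynomial ℕ ℚ

/-- `R(x) = 1 + Σ_{i≥2} Rᵢ xⁱ`. -/
def Rser : PowerSeries A :=
  PowerSeries.mk fun n => if n = 0 then 1 else if 2 ≤ n then MvPolynomial.X n else 0

/-- `F(x) = x / R(x)`. -/
def Fser : PowerSeries A := PowerSeries.X * PowerSeries.invOfUnit Rser 1

/-- Composition `f(g)` of formal power series (the standard coefficient formula,
valid when `g` has zero constant term). -/
def psComp {R : Type*} [CommRing R] (f g : PowerSeries R) : PowerSeries R :=
  PowerSeries.mk fun n => ∑ m ∈ Finset.range (n + 1),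
    PowerSeries.coeff (R := R) m f * PowerSeries.coeff (R := R) n (g ^ m)

/-- `f/X` : the series with coefficients shifted down by one (honest division by `X`
when `f` has zero constant term). -/
def shiftPS {R : Type*} [CommRing R] (f : PowerSeries R) : PowerSeries R :=
  PowerSeries.mk fun n => PowerSeries.coeff (R := R) (n + 1) f

/-- `y/(1 - j·y)`. -/
def argSer (j : ℕ) : PowerSeries A :=
  PowerSeries.X * PowerSeries.invOfUnit (1 - (j : A) • PowerSeries.X) 1

/-- Kerov's character polynomial `Σ_k`, defined (following Biane and Stanley) by
`Σ_k = -(1/k)·[y¹] ∏_{j=0}^{k-1} (F⁻¹(y/(1-jy)))^{-1}`, where each factor is the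
Laurent series `y⁻¹·hⱼ⁻¹` with `hⱼ = F⁻¹(y/(1-jy))/y` a power series with constant
term `1`; so `[y¹]` of the product is `[y^{k+1}] ∏_j hⱼ⁻¹`. -/
def KSigma (Finv : PowerSeries A) (k : ℕ) : A :=
  (-(1 : ℚ) / k) • PowerSeries.coeff (R := A) (k + 1)
    (∏ j ∈ Finset.range k,
      PowerSeries.invOfUnit (shiftPS (psComp Finv (argSer j))) 1)

/-- The graded piece `Σ_{k,2n} = [u^{k+1-2n}] Σ_k(R₂u², R₃u³, …)`. -/
def KSigmaW (Finv : PowerSeries A) (k n : ℕ) : A :=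
  (MvPolynomial.aeval
      (fun i => Polynomial.C (MvPolynomial.X i : A) * Polynomial.X ^ i)
      (KSigma Finv k)).coeff (k + 1 - 2 * n)

/-- `1/C(t) = 1 - Σ_{i≥2} (i-1) Rᵢ tⁱ`. -/
def Cden : PowerSeries A :=
  PowerSeries.mk fun n =>
    if n = 0 then 1 else if 2 ≤ n then -(((n : ℚ) - 1) • MvPolynomial.X n) else 0

/-- `C(t) = (1 - Σ_{i≥2} (i-1) Rᵢ tⁱ)⁻¹ = Σ_m C_m t^m`. -/
def Cser : PowerSeries A := PowerSeries.invOfUnit Cden 1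

/-- The operator `D = t·d/dt`. -/
def Dop {R : Type*} [CommRing R] (f : PowerSeries R) : PowerSeries R :=
  PowerSeries.mk fun n => (n : R) * PowerSeries.coeff (R := R) n f

/-- `Schain j = C(t)(D+(j-1)I)C(t)⋯(D+I)C(t)·DC(t) ⋯`: the chain with
`Schain 0 = C(t)`, `Schain (j+1) = C(t)·(D + j·I)(Schain j)`, so that
`Schain (m-1)` is the product `C(D+(m-2)I)C⋯(D+I)C·DC` appearing in `P_m`. -/
def Schain : ℕ → PowerSeries A
  | 0 => Cser
  | j + 1 => Cser * (Dop (Schain j) + (j : ℚ) • Schain j)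

/-- `P_m(t) = -(1/m!)·C(t)(D+(m-2)I)C(t)⋯(D+I)C(t)·DC(t)`, for `m ≥ 1`
(so `P₁ = -C`, `P₂ = -(1/2)C·DC`). -/
def Pser (m : ℕ) : PowerSeries A :=
  (-(1 : ℚ) / m.factorial) • Schain (m - 1)

/-- `P_λ(t) = ∏_j P_{λ_j}(t)` for a partition (multiset) `λ`. -/
def Pprod (lam : Multiset ℕ) : PowerSeries A := (lam.map Pser).prod

/-- `m̂_λ`: the monomial symmetric function `m_λ` evaluated at `x_i = i` for
`1 ≤ i ≤ k-1` and `x_i = 0` for `i ≥ k`:  the sum, over all exponent vectors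
`α` on the `k-1` variables whose multiset of nonzero values is `λ`, of
`∏_i i^{α_i}`. -/
def mhat (k : ℕ) (lam : Multiset ℕ) : ℚ :=
  ∑ α : Fin (k - 1) → Fin (lam.sum + 1),
    if (Multiset.filter (fun x => x ≠ 0)
        (Multiset.map (fun i => (α i : ℕ)) (Finset.univ : Finset (Fin (k - 1))).val)) = lam
    then ∏ i : Fin (k - 1), ((i : ℕ) + 1 : ℚ) ^ ((α i : ℕ)) else 0

def phiSer (Finv : PowerSeries A) : PowerSeries A :=
  PowerSeries.invOfUnit (shiftPS Finv) 1

def PhiAt (Finv : PowerSeries A) (j : ℕ) : PowerSeries A :=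
  (1 - (j : A) • PowerSeries.X) * psComp (phiSer Finv) (argSer j)

section Aux

open PowerSeries

variable {R : Type*} [CommRing R]

lemma coeff_pow_zero_of_lt {g : PowerSeries R} (hg : constantCoeff g = 0)
    {m n : ℕ} (h : n < m) : coeff n (g ^ m) = 0 :=
  (X_pow_dvd_iff.mp (pow_dvd_pow_of_dvd (X_dvd_iff.mpr hg) m)) n h

lemma coeff_psComp (f g : PowerSeries R) (n : ℕ) :
    coeff n (psComp f g) = ∑ m ∈ Finset.range (n + 1),
      coeff m f * coeff n (g ^ m) := by
  simp [psComp]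

lemma coeff_eval₂ (P : Polynomial R) {g : PowerSeries R} (hg : constantCoeff g = 0)
    (n : ℕ) :
    coeff n (P.eval₂ C g) = ∑ i ∈ Finset.range (n + 1), P.coeff i * coeff n (g ^ i) := by
  have hd : P.natDegree < max (n + 1) (P.natDegree + 1) :=
    lt_of_lt_of_le (Nat.lt_succ_self _) (le_max_right _ _)
  rw [Polynomial.eval₂_eq_sum_range' C hd g, map_sum]
  simp only [map_mul, coeff_C_mul]
  symm
  apply Finset.sum_subset
  · exact Finset.range_subset_range.mpr (le_max_left _ _)
  · intro i _ hi
    rw [Finset.mem_range, not_lt] at hi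
    rw [coeff_pow_zero_of_lt hg (lt_of_lt_of_le (Nat.lt_succ_self n) hi), mul_zero]

lemma coeff_psComp_eq_eval₂ {f g : PowerSeries R} (hg : constantCoeff g = 0)
    {a n : ℕ} (h : a ≤ n) :
    coeff a (psComp f g) = coeff a ((trunc (n + 1) f).eval₂ C g) := by
  rw [coeff_psComp, coeff_eval₂ _ hg]
  apply Finset.sum_congr rfl
  intro i hi
  rw [Finset.mem_range] at hi
  rw [coeff_trunc, if_pos (by omega)]

lemma psComp_mul {f₁ f₂ g : PowerSeries R} (hg : constantCoeff g = 0) :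
    psComp (f₁ * f₂) g = psComp f₁ g * psComp f₂ g := by
  ext n
  set P₁ := trunc (n + 1) f₁ with hP₁
  set P₂ := trunc (n + 1) f₂ with hP₂
  have key : coeff n (psComp (f₁ * f₂) g) = coeff n ((P₁ * P₂).eval₂ C g) := by
    rw [coeff_psComp, coeff_eval₂ _ hg]
    apply Finset.sum_congr rfl
    intro i hi
    rw [Finset.mem_range] at hi
    congr 1
    rw [← Polynomial.coeff_coe, Polynomial.coe_mul, ← coeff_coe_trunc_of_lt hi,
      hP₁, hP₂, ← trunc_trunc_mul_trunc, coeff_coe_trunc_of_lt hi]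
  rw [key, Polynomial.eval₂_mul, coeff_mul, coeff_mul]
  apply Finset.sum_congr rfl
  intro p hp
  rw [Finset.HasAntidiagonal.mem_antidiagonal] at hp
  rw [coeff_psComp_eq_eval₂ hg (show p.1 ≤ n by omega),
    coeff_psComp_eq_eval₂ hg (show p.2 ≤ n by omega)]

lemma psComp_one (g : PowerSeries R) : psComp 1 g = 1 := by
  ext n
  rw [coeff_psComp, Finset.sum_eq_single 0]
  · simp
  · intro m _ hm
    rw [coeff_one, if_neg hm, zero_mul]
  · simp

lemma psComp_X {g : PowerSeries R} (hg : constantCoeff g = 0) :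
    psComp X g = g := by
  ext n
  rw [coeff_psComp]
  rcases n with _ | n
  · simpa using hg.symm
  · rw [Finset.sum_eq_single 1]
    · simp
    · intro m _ hm
      rw [coeff_X, if_neg hm, zero_mul]
    · intro h
      exact absurd (Finset.mem_range.mpr (by omega)) h

lemma shiftPS_X_mul (h : PowerSeries R) : shiftPS (X * h) = h := by
  ext n
  simp [shiftPS, coeff_succ_X_mul]

lemma X_mul_shiftPS {f : PowerSeries R} (hf : constantCoeff f = 0) :
    X * shiftPS f = f := by
  ext n
  rcases n with _ | n
  · simp [hf]
  · simp [shiftPS, coeff_succ_X_mul]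

lemma constantCoeff_psComp (f g : PowerSeries R) :
    constantCoeff (psComp f g) = constantCoeff f := by
  have := coeff_psComp f g 0
  simpa using this

lemma inv_unique' {a b c : R} (hab : a * b = 1) (hac : a * c = 1) : b = c := by
  calc b = b * (a * c) := by rw [hac, mul_one]
    _ = (a * b) * c := by ring
    _ = c := by rw [hab, one_mul]

lemma constantCoeff_argSer (j : ℕ) : constantCoeff (argSer j) = 0 := by
  simp [argSer]

lemma one_sub_smul_mul_inv (j : ℕ) :
    (1 - (j : A) • (X : PowerSeries A)) * invOfUnit (1 - (j : A) • (X : PowerSeries A)) 1 = 1 := by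
  apply mul_invOfUnit
  rw [map_sub, map_one, ← coeff_zero_eq_constantCoeff_apply, LinearMap.map_smul]
  simp

lemma factor_eq (Finv : PowerSeries A) (hFinv0 : constantCoeff Finv = 0)
    (hh : constantCoeff (shiftPS Finv) = 1) (j : ℕ) :
    invOfUnit (shiftPS (psComp Finv (argSer j))) 1 = PhiAt Finv j := by
  set g := argSer j with hgdef
  set q := invOfUnit (1 - (j : A) • (X : PowerSeries A)) 1 with hqdef
  set h := shiftPS Finv with hhdef
  have hgc : constantCoeff g = 0 := constantCoeff_argSer j
  have hdecomp : psComp Finv g = X * (q * psComp h g) := by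
    conv_lhs => rw [← X_mul_shiftPS hFinv0]
    rw [psComp_mul hgc, psComp_X hgc, hgdef, argSer, ← hqdef, ← hhdef]
    ring
  have hs : shiftPS (psComp Finv g) = q * psComp h g := by
    rw [hdecomp, shiftPS_X_mul]
  have hsc : constantCoeff (q * psComp h g) = 1 := by
    rw [map_mul, constantCoeff_psComp, hh, hqdef, constantCoeff_invOfUnit]
    simp
  have hmain : (q * psComp h g) * PhiAt Finv j = 1 := by
    unfold PhiAt phiSer
    rw [← hgdef, ← hhdef]
    calc (q * psComp h g) * ((1 - (j : A) • (X : PowerSeries A)) * psComp (invOfUnit h 1) g)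
        = ((1 - (j : A) • (X : PowerSeries A)) * q) * (psComp h g * psComp (invOfUnit h 1) g) := by ring
      _ = 1 * psComp (h * invOfUnit h 1) g := by
          rw [one_sub_smul_mul_inv, ← psComp_mul hgc]
      _ = 1 := by
          rw [mul_invOfUnit h 1 (by simpa using hh), psComp_one, one_mul]
  rw [hs]
  have hinv : (q * psComp h g) * invOfUnit (q * psComp h g) 1 = 1 :=
    mul_invOfUnit _ 1 (by simpa using hsc)
  exact inv_unique' hinv hmain

lemma coeff_one_Finv {Finv : PowerSeries A} (hFinv : psComp Fser Finv = X) :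
    coeff 1 Finv = 1 := by
  have h := congrArg (coeff 1) hFinv
  rw [coeff_psComp, Finset.sum_range_succ, Finset.sum_range_one] at h
  simp only [pow_zero, pow_one] at h
  rw [coeff_one_X] at h
  have h0 : coeff 0 Fser = 0 := by simp [Fser]
  have h1 : coeff 1 Fser = 1 := by
    rw [Fser, coeff_succ_X_mul, coeff_zero_eq_constantCoeff, constantCoeff_invOfUnit]
    simp
  rw [h0, h1, zero_mul, zero_add, one_mul] at h
  exact h

end Aux

theorem stmt13 (k : ℕ) (hk : 1 ≤ k)
    (Finv : PowerSeries A) (hFinv0 : PowerSeries.constantCoeff (R := A) Finv = 0)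
    (hFinv : psComp Fser Finv = PowerSeries.X) :
    KSigma Finv k =
      (-(1 : ℚ) / k) • PowerSeries.coeff (R := A) (k + 1) (∏ j ∈ Finset.range k, PhiAt Finv j) := by
  have h1 : PowerSeries.coeff 1 Finv = 1 := coeff_one_Finv hFinv
  have hh : PowerSeries.constantCoeff (shiftPS Finv) = 1 := by
    rw [← PowerSeries.coeff_zero_eq_constantCoeff_apply]
    simpa [shiftPS] using h1
  unfold KSigma
  congr 2
  exact Finset.prod_congr rfl fun j _ => factor_eq Finv hFinv0 hh j

end
end

section
/- For every i ≥ 1, −(1/i!)·(tC(t)D)^{i−1} C(t) = t^{i−1}·P_i(t), where (tC(t)D) denotes the operator on formal power series in t sending f to t·C(t)·Df, applied i−1 times to C(t). -/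
noncomputable section

lemma Dop_X_pow_mul (j : ℕ) (f : PowerSeries A) :
    Dop (PowerSeries.X ^ j * f) = PowerSeries.X ^ j * (Dop f + (j : ℚ) • f) := by
  refine PowerSeries.ext fun n => ?_
  simp only [Dop, PowerSeries.coeff_mk, PowerSeries.coeff_X_pow_mul', map_add,
    PowerSeries.coeff_smul, MvPolynomial.smul_eq_C_mul]
  split_ifs with h
  · have hn : ((n : A)) = ((n - j : ℕ) : A) + (j : A) := by
      rw [Nat.cast_sub h]; ring
    rw [hn, add_mul, map_natCast MvPolynomial.C j]
  · simp

lemma iter_eq (j : ℕ) :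
    (fun f : PowerSeries A => PowerSeries.X * Cser * Dop f)^[j] Cser
      = PowerSeries.X ^ j * Schain j := by
  induction j with
  | zero => simp [Schain]
  | succ j ih =>
      rw [Function.iterate_succ_apply', ih, Dop_X_pow_mul, Schain]
      ring

theorem stmt18 (i : ℕ) (hi : 1 ≤ i) :
    (-(1 : ℚ) / i.factorial) •
        (fun f : PowerSeries A => PowerSeries.X * Cser * Dop f)^[i - 1] Cser
      = PowerSeries.X ^ (i - 1) * Pser i := by
  rw [iter_eq, Pser, mul_smul_comm]

end
end
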